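/- In the sweep-plane minimum-removal algorithm on an imprecise terrain T, the set of nodes reported as proxies is exactly a set containing precisely one proxy of each imprecise minimum of T; in particular, every reported node is a proxy of some imprecise minimum, and every imprecise minimum has exactly one reported proxy. -/

import Mathlib

open scoped Classical
open Set

/-- An imprecise terrain: a finite geometric graph with nodes in the plane,
each node carrying an elevation interval `[low v, high v]`. -/
structure ImpTerrain (V : Type) [Fintype V] [DecidableEq V] where
  pos : V → ℝ × ℝ
  posInj : Function.Injective pos
  adj : V → V → Prop
  adj_symm : ∀ u v, adj u v → adj v u
  adj_irrefl : ∀ v, ¬ adj v v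
  low : V → ℝ
  high : V → ℝ

namespace ImpTerrain

variable {V : Type} [Fintype V] [DecidableEq V]

/-- A realization assigns to each node an elevation within its interval. -/
def IsRealization (T : ImpTerrain V) (R : V → ℝ) : Prop :=
  ∀ v, T.low v ≤ R v ∧ R v ≤ T.high v

/-- Horizontal (plane) distance between two nodes. -/
noncomputable def hdist (T : ImpTerrain V) (u v : V) : ℝ := dist (T.pos u) (T.pos v)

/-- Slope (steepness of descent) of the edge from `p` to `q` in realization `R`. -/
noncomputable def slope (T : ImpTerrain V) (R : V → ℝ) (p q : V) : ℝ :=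
  (R p - R q) / T.hdist p q

/-- `q` is a steepest-descent neighbor of `p` in `R`. -/
def SDN (T : ImpTerrain V) (R : V → ℝ) (p q : V) : Prop :=
  T.adj p q ∧ 0 ≤ T.slope R p q ∧ ∀ r, T.adj p r → T.slope R p r ≤ T.slope R p q

/-- The neighborhood of a set of nodes. -/
def Nbhd (T : ImpTerrain V) (P : Set V) : Set V :=
  {s | s ∉ P ∧ ∃ t ∈ P, T.adj s t}

/-- `u` and `v` are connected by a path staying inside `P`. -/
def ConnIn (T : ImpTerrain V) (P : Set V) (u v : V) : Prop :=
  Relation.ReflTransGen (fun a b => T.adj a b ∧ a ∈ P ∧ b ∈ P) u v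

/-- `P` is a local minimum in realization `R`: nonempty, connected, all nodes at
the same elevation, strictly below its neighborhood. -/
def LocalMin (T : ImpTerrain V) (R : V → ℝ) (P : Set V) : Prop :=
  P.Nonempty ∧ (∀ u ∈ P, ∀ v ∈ P, T.ConnIn P u v) ∧
    (∀ u ∈ P, ∀ v ∈ P, R u = R v) ∧ (∀ u ∈ P, ∀ t ∈ T.Nbhd P, R u < R t)

def InLocalMin (T : ImpTerrain V) (R : V → ℝ) (p : V) : Prop :=
  ∃ P, T.LocalMin R P ∧ p ∈ P

/-- One step of discrete water flow. -/
def FlowStep (T : ImpTerrain V) (R : V → ℝ) (p q : V) : Prop :=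
  (∃ P, T.LocalMin R P ∧ p ∈ P ∧ q ∈ P ∧ T.adj p q) ∨
    (¬ T.InLocalMin R p ∧ T.SDN R p q)

/-- `p ⇝_R q` : water from `p` reaches `q` in realization `R`. -/
def FlowsTo (T : ImpTerrain V) (R : V → ℝ) : V → V → Prop :=
  Relation.ReflTransGen (T.FlowStep R)

/-- The (discrete) watershed of a set of nodes `Q` in realization `R`. -/
def WS (T : ImpTerrain V) (R : V → ℝ) (Q : Set V) : Set V :=
  {p | ∃ q ∈ Q, T.FlowsTo R p q}

/-- The potential watershed of `Q`. -/
def PoWS (T : ImpTerrain V) (Q : Set V) : Set V :=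
  {p | ∃ R, T.IsRealization R ∧ p ∈ T.WS R Q}

/-- A flow path: a simple path following steepest-descent edges that ends in,
and visits all nodes of, a local minimum. -/
def IsFlowPath (T : ImpTerrain V) (R : V → ℝ) (L : List V) : Prop :=
  L.Nodup ∧ L.Chain' (fun p q => T.SDN R p q) ∧
    ∃ P, T.LocalMin R P ∧ (∀ v ∈ P, v ∈ L) ∧ ∃ hne : L ≠ [], L.getLast hne ∈ P

/-- The `Q`-avoiding potential watershed of `S`: nodes having, in some
realization, a flow path to a node of `S` whose portion up to that node
avoids `Q`. -/
def AvWS (T : ImpTerrain V) (Q S : Set V) : Set V :=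
  {p | ∃ R, T.IsRealization R ∧ ∃ L, T.IsFlowPath R L ∧ ∃ s ∈ S,
    ∃ i j : Fin L.length, (i : ℕ) ≤ (j : ℕ) ∧ L.get i = p ∧ L.get j = s ∧
      ∀ k : Fin L.length, (i : ℕ) ≤ (k : ℕ) → (k : ℕ) ≤ (j : ℕ) → L.get k ∉ Q}

/-- The persistent watershed of `Q`. -/
def PsWS (T : ImpTerrain V) (Q : Set V) : Set V :=
  (T.AvWS Q (T.PoWS Q)ᶜ)ᶜ

/-- The core watershed of `Q`: nodes from which every induced flow path leads
to a node of `Q`. -/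
def CoWS (T : ImpTerrain V) (Q : Set V) : Set V :=
  {p | ∀ R, T.IsRealization R → ∀ L, T.IsFlowPath R L →
    ∀ i : Fin L.length, L.get i = p →
      ∃ q ∈ Q, ∃ j : Fin L.length, (i : ℕ) ≤ (j : ℕ) ∧ L.get j = q}

/-- Union of all node sets disjoint from `Q` that form a local minimum in some
realization. -/
def Vmin (T : ImpTerrain V) (Q : Set V) : Set V :=
  ⋃₀ {r | r ∩ Q = ∅ ∧ ∃ R, T.IsRealization R ∧ T.LocalMin R r}

/-- `S` contains a local minimum in every realization. -/
def AlwaysMin (T : ImpTerrain V) (S : Set V) : Prop :=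
  ∀ R, T.IsRealization R → ∃ P, T.LocalMin R P ∧ P ⊆ S

/-- An imprecise minimum: a minimal set containing a local minimum in every
realization. -/
def ImpreciseMin (T : ImpTerrain V) (S : Set V) : Prop :=
  T.AlwaysMin S ∧ ∀ S', S' ⊂ S → ¬ T.AlwaysMin S'

/-- A terrain is regular if every local minimum of the lowermost realization is
an imprecise minimum. -/
def Regular (T : ImpTerrain V) : Prop :=
  ∀ P, T.LocalMin T.low P → T.ImpreciseMin P

/-- A proxy of `S`: a node of `S` from which water can never reach a node
outside `S` in any realization. -/
def IsProxy (T : ImpTerrain V) (S : Set V) (p : V) : Prop :=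
  p ∈ S ∧ ∀ R, T.IsRealization R → ∀ q, q ∉ S → ¬ T.FlowsTo R p q

/-- `R'` is an `ε`-perturbation of `R`. -/
def Perturb (ε : ℝ) (R R' : V → ℝ) : Prop := ∀ v, |R' v - R v| ≤ ε

/-- `S` together with all `ε`-perturbations of its members (`S^ε`). -/
def Enlarge (S : Set (V → ℝ)) (ε : ℝ) : Set (V → ℝ) :=
  S ∪ {R' | ∃ R ∈ S, Perturb ε R R'}

/-- `Π(S)` : flow paths induced by realizations in `S`. -/
def FlowPathsOf (T : ImpTerrain V) (S : Set (V → ℝ)) : Set (List V) :=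
  {L | ∃ R ∈ S, T.IsFlowPath R L}

/-- A flow path is stable with respect to `S`. -/
def StableWrt (T : ImpTerrain V) (S : Set (V → ℝ)) (L : List V) : Prop :=
  ∃ ε > (0 : ℝ), ∃ R ∈ S, ∀ R', Perturb ε R R' → T.IsFlowPath R' L

/-- State of the sweep-plane minimum-removal algorithm. -/
structure SweepState (V : Type) where
  discovered : Set V
  final : V → Option ℝ
  proxies : Set V

def pendingS (st : SweepState V) (v : V) : Prop :=
  v ∈ st.discovered ∧ st.final v = none

/-- Pending component of `v`. -/
def pendComp (T : ImpTerrain V) (st : SweepState V) (v : V) : Set V :=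
  {u | Relation.ReflTransGen (fun a b => T.adj a b ∧ pendingS st a ∧ pendingS st b) v u}

/-- One step of the sweep algorithm, processing a `low` event `(v, false)` or a
`high` event `(v, true)`. -/
noncomputable def sweepStep (T : ImpTerrain V) (st : SweepState V) : V × Bool → SweepState V
  | (v, false) =>
    let st1 : SweepState V := ⟨insert v st.discovered, st.final, st.proxies⟩
    if ∃ u, T.adj v u ∧ (st.final u).isSome = true then
      ⟨st1.discovered,
        fun w => if w ∈ T.pendComp st1 v then some (T.low v) else st.final w,
        st.proxies⟩
    else st1
  | (v, true) =>
    if (st.final v).isSome = true then st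
    else
      ⟨st.discovered,
        fun w =>
          if w ∈ T.pendComp st v then some (sSup (T.low '' T.pendComp st v))
          else st.final w,
        insert v st.proxies⟩

noncomputable def sweepRun (T : ImpTerrain V) (evs : List (V × Bool)) : SweepState V :=
  evs.foldl T.sweepStep ⟨∅, fun _ => none, ∅⟩

/-- Elevation key of an event. -/
def eKey (T : ImpTerrain V) : V × Bool → ℝ
  | (v, false) => T.low v
  | (v, true) => T.high v

/-- A valid event list: all events, each once, sorted by elevation with low
events before high events at equal elevation. -/
def ValidEventList (T : ImpTerrain V) (evs : List (V × Bool)) : Prop :=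
  (∀ v : V, ∀ b : Bool, (v, b) ∈ evs) ∧ evs.Nodup ∧
    evs.Pairwise (fun e1 e2 =>
      T.eKey e1 < T.eKey e2 ∨ (T.eKey e1 = T.eKey e2 ∧ ¬(e1.2 = true ∧ e2.2 = false)))

/-- The realization `M` computed by the sweep algorithm. -/
noncomputable def sweepM (T : ImpTerrain V) (evs : List (V × Bool)) : V → ℝ :=
  fun v => ((T.sweepRun evs).final v).getD (T.high v)

end ImpTerrain

/-!
For a node `v`, call the component of `v` among the nodes with `low ≤ high v` its basin. In
every realization water from `v` stays in the basin, and the basin contains a local minimum.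
If `high v` is the least `high` in its basin, the basin is an imprecise minimum: raising the
whole basin to `high v` leaves no proper subset that always contains a local minimum.
Conversely, in the realization assigning to each node the least `high` of a basin containing
it, every local minimum contains such a basin, so every imprecise minimum is one.

The sweep reports a node exactly at the first high event inside such a basin: until then no node
of the basin is finalized, and at that moment the pending component of the node is the whole
basin, which is then finalized at once, so no second node of it is ever reported.
-/

namespace ImpTerrain

variable {V : Type} [Fintype V] [DecidableEq V] {T : ImpTerrain V}

-- Contains `p` even when `Q p` fails (it is then `{p}`).
def component (T : ImpTerrain V) (Q : V → Prop) (p : V) : Set V :=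
  {w | Relation.ReflTransGen (fun a b => T.adj a b ∧ Q a ∧ Q b) p w}

section Component

variable {Q Q' : V → Prop} {p u w x : V}

lemma mem_component_self : p ∈ T.component Q p := Relation.ReflTransGen.refl

lemma mem_component_of_adj (hw : w ∈ T.component Q p) (hadj : T.adj w x) (hQw : Q w)
    (hQx : Q x) : x ∈ T.component Q p :=
  Relation.ReflTransGen.tail hw ⟨hadj, hQw, hQx⟩

lemma component_subset {S : Set V} (hp : p ∈ S)
    (hS : ∀ a b, a ∈ S → T.adj a b → Q a → Q b → b ∈ S) : T.component Q p ⊆ S := by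
  intro w hw
  induction hw with
  | refl => exact hp
  | tail _ hab ih => exact hS _ _ ih hab.1 hab.2.1 hab.2.2

lemma prop_of_mem_component (hp : Q p) (hw : w ∈ T.component Q p) : Q w := by
  induction hw with
  | refl => exact hp
  | tail _ hab => exact hab.2.2

lemma component_symm (hw : w ∈ T.component Q p) : p ∈ T.component Q w := by
  induction hw with
  | refl => exact mem_component_self
  | tail _ hab ih =>
    exact Relation.ReflTransGen.head ⟨T.adj_symm _ _ hab.1, hab.2.2, hab.2.1⟩ ih

lemma component_trans (hw : w ∈ T.component Q p) (hx : x ∈ T.component Q w) :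
    x ∈ T.component Q p :=
  Relation.ReflTransGen.trans hw hx

lemma component_eq_of_mem (hw : w ∈ T.component Q p) : T.component Q w = T.component Q p :=
  Set.ext fun _ => ⟨component_trans hw, component_trans (component_symm hw)⟩

lemma component_mono (h : ∀ w, Q w → Q' w) : T.component Q p ⊆ T.component Q' p :=
  component_subset mem_component_self fun _ _ ha hab hQa hQb =>
    mem_component_of_adj ha hab (h _ hQa) (h _ hQb)

lemma connIn_component (hp : Q p) (hu : u ∈ T.component Q p) (hw : w ∈ T.component Q p) :
    T.ConnIn (T.component Q p) u w := by
  have hsub : T.component Q p ⊆ T.component (· ∈ T.component Q p) p :=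
    component_subset mem_component_self fun a b ha hab _ hQb =>
      have haC : a ∈ T.component Q p := prop_of_mem_component mem_component_self ha
      mem_component_of_adj ha hab haC
        (mem_component_of_adj haC hab (prop_of_mem_component hp haC) hQb)
  show w ∈ T.component (· ∈ T.component Q p) u
  rw [component_eq_of_mem (hsub hu)]
  exact hsub hw

end Component

section LocalMin

variable {R : V → ℝ} {P : Set V} {Q : V → Prop} {p : V}

lemma LocalMin.mem_of_adj_of_le (hP : T.LocalMin R P) {a b : V} (ha : a ∈ P)
    (hab : T.adj a b) (hle : R b ≤ R a) : b ∈ P := by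
  by_contra hb
  exact (hP.2.2.2 a ha b ⟨hb, a, ha, T.adj_symm a b hab⟩).not_ge hle

lemma LocalMin.component_subset_of_le (hP : T.LocalMin R P) (hp : p ∈ P)
    (hR : ∀ w ∈ T.component Q p, R w ≤ R p) : T.component Q p ⊆ P := by
  have : T.component Q p ⊆ P ∩ T.component Q p :=
    component_subset ⟨hp, mem_component_self⟩ fun a b ha hab hQa hQb => by
      have hb := mem_component_of_adj ha.2 hab hQa hQb
      refine ⟨hP.mem_of_adj_of_le ha.1 hab ?_, hb⟩
      rw [hP.2.2.1 a ha.1 p hp]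
      exact hR b hb
  exact this.trans inter_subset_left

end LocalMin

section Flow

variable {R : V → ℝ} {t : ℝ} {p q v : V}

lemma hdist_pos (h : T.adj p q) : 0 < T.hdist p q := by
  have hpq : p ≠ q := by
    rintro rfl
    exact T.adj_irrefl p h
  exact dist_pos.2 (T.posInj.ne hpq)

lemma SDN.le (h : T.SDN R p q) : R q ≤ R p := by
  have := h.2.1
  rw [slope, le_div_iff₀ (hdist_pos h.1)] at this
  linarith

lemma FlowStep.adj_and_le (h : T.FlowStep R p q) : T.adj p q ∧ R q ≤ R p := by
  rcases h with ⟨P, hP, hp, hq, hadj⟩ | ⟨_, hsdn⟩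
  · exact ⟨hadj, (hP.2.2.1 q hq p hp).le⟩
  · exact ⟨hsdn.1, hsdn.le⟩

lemma low_le_of_mem_component {w : V} (hp : T.low p ≤ t)
    (hw : w ∈ T.component (fun x => T.low x ≤ t) p) : T.low w ≤ t :=
  prop_of_mem_component (Q := fun x => T.low x ≤ t) hp hw

lemma flowsTo_mem_component (hR : T.IsRealization R) (hv : R v ≤ t) (h : T.FlowsTo R v q) :
    q ∈ T.component (fun w => T.low w ≤ t) v := by
  suffices q ∈ T.component (fun w => T.low w ≤ t) v ∧ R q ≤ R v from this.1
  induction h with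
  | refl => exact ⟨mem_component_self, le_rfl⟩
  | @tail b c _ hbc ih =>
    obtain ⟨hadj, hcb⟩ := hbc.adj_and_le
    refine ⟨mem_component_of_adj ih.1 hadj ?_ ?_, hcb.trans ih.2⟩
    · linarith [(hR b).1, ih.2]
    · linarith [(hR c).1, ih.2]

-- The witness is the plateau around a lowest node of the component.
lemma exists_localMin_subset_component (hR : T.IsRealization R) (hv : R v ≤ t) :
    ∃ P, T.LocalMin R P ∧ P ⊆ T.component (fun w => T.low w ≤ t) v := by
  set C := T.component (fun w => T.low w ≤ t) v
  obtain ⟨p, hpC, hpmin⟩ := Set.exists_min_image C R C.toFinite ⟨v, mem_component_self⟩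
  have hlow : ∀ w, R w ≤ R p → T.low w ≤ t := fun w hw =>
    by linarith [(hR w).1, hpmin v mem_component_self]
  set P := T.component (fun w => R w = R p) p
  have hPC : P ⊆ C :=
    component_subset hpC fun _ b ha hab hRa hRb =>
      mem_component_of_adj ha hab (hlow _ hRa.le) (hlow b hRb.le)
  have hPR : ∀ w ∈ P, R w = R p :=
    fun _ hw => prop_of_mem_component (Q := fun w => R w = R p) rfl hw
  refine ⟨P, ⟨⟨p, mem_component_self⟩, fun u hu w hw => connIn_component rfl hu hw,
    fun u hu w hw => by rw [hPR u hu, hPR w hw], fun u hu s ⟨hsP, a, haP, hsa⟩ => ?_⟩, hPC⟩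
  rw [hPR u hu]
  by_contra! hsp
  have haR := hPR a haP
  have hsC : s ∈ C := mem_component_of_adj (hPC haP) (T.adj_symm s a hsa)
    (hlow a haR.le) (hlow s hsp)
  have hsR : R s = R p := le_antisymm hsp (hpmin s hsC)
  exact hsP (mem_component_of_adj haP (T.adj_symm s a hsa) haR hsR)

end Flow

abbrev basin (T : ImpTerrain V) (v : V) : Set V :=
  T.component (fun w => T.low w ≤ T.high v) v

def IsLowestHigh (T : ImpTerrain V) (v : V) : Prop :=
  ∀ w ∈ T.basin v, T.high v ≤ T.high w

section Basin

variable {u v : V}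

lemma LocalMin.basin_subset {R : V → ℝ} {P : Set V} (hP : T.LocalMin R P) {p : V} (hp : p ∈ P)
    (hpv : p ∈ T.basin v) (hR : ∀ w ∈ T.basin v, R w ≤ R p) : T.basin v ⊆ P := by
  have := hP.component_subset_of_le (Q := fun x => T.low x ≤ T.high v) hp
    fun w hw => hR w ((component_eq_of_mem hpv).subset hw)
  rwa [component_eq_of_mem hpv] at this

lemma isProxy_basin (v : V) : T.IsProxy (T.basin v) v :=
  ⟨mem_component_self, fun _ hR _ hq hflow => hq (flowsTo_mem_component hR (hR v).2 hflow)⟩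

lemma alwaysMin_basin (v : V) : T.AlwaysMin (T.basin v) :=
  fun _ hR => exists_localMin_subset_component hR (hR v).2

-- Raising the whole basin to `high v` makes it one plateau, so a local minimum inside it is
-- all of it.
lemma IsLowestHigh.not_alwaysMin_of_ssubset (hle : ∀ v, T.low v ≤ T.high v)
    (hv : T.IsLowestHigh v) {S : Set V} (hS : S ⊂ T.basin v) : ¬ T.AlwaysMin S := by
  intro hAM
  set R : V → ℝ := fun w => if w ∈ T.basin v then T.high v else T.low w
  have hR : T.IsRealization R := by
    intro w
    by_cases hw : w ∈ T.basin v
    · simp only [R, if_pos hw]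
      exact ⟨low_le_of_mem_component (hle v) hw, hv w hw⟩
    · simp only [R, if_neg hw]
      exact ⟨le_rfl, hle w⟩
  obtain ⟨P, hP, hPS⟩ := hAM R hR
  obtain ⟨p, hp⟩ := hP.1
  have hpv : p ∈ T.basin v := hS.1 (hPS hp)
  have hvP : T.basin v ⊆ P := hP.basin_subset hp hpv fun w hw => by
    simp only [R, if_pos hw, if_pos hpv, le_refl]
  exact hS.not_subset (hvP.trans hPS)

lemma IsLowestHigh.impreciseMin (hle : ∀ v, T.low v ≤ T.high v) (hv : T.IsLowestHigh v) :
    T.ImpreciseMin (T.basin v) :=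
  ⟨alwaysMin_basin v, fun _ hS => hv.not_alwaysMin_of_ssubset hle hS⟩

lemma IsLowestHigh.basin_eq (hu : T.IsLowestHigh u) (hv : T.IsLowestHigh v)
    (huv : u ∈ T.basin v) : T.basin u = T.basin v := by
  have hvu : T.high v ≤ T.high u := hv u huv
  have hhigh : T.high u = T.high v :=
    le_antisymm (hu v (component_mono (fun _ hw => hw.trans hvu) (component_symm huv))) hvu
  rw [basin, hhigh]
  exact component_eq_of_mem huv

lemma exists_isLowestHigh_basin_subset (v : V) :
    ∃ u, T.IsLowestHigh u ∧ T.basin u ⊆ T.basin v := by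
  obtain ⟨u, hu, hmin⟩ :=
    Set.exists_min_image (T.basin v) T.high (Set.toFinite _) ⟨v, mem_component_self⟩
  have hsub : T.basin u ⊆ T.basin v := fun w hw =>
    component_trans hu (component_mono (fun _ hx => hx.trans (hmin v mem_component_self)) hw)
  exact ⟨u, fun w hw => hmin w (hsub hw), hsub⟩

noncomputable def lowestBasinHigh (T : ImpTerrain V) (w : V) : ℝ :=
  (Finset.univ.filter fun v => w ∈ T.basin v).inf' ⟨w, by simp [mem_component_self]⟩ T.high

lemma lowestBasinHigh_le {w : V} (hw : w ∈ T.basin v) : T.lowestBasinHigh w ≤ T.high v :=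
  Finset.inf'_le _ (by simpa using hw)

lemma exists_lowestBasinHigh_eq (w : V) :
    ∃ v, w ∈ T.basin v ∧ T.lowestBasinHigh w = T.high v := by
  obtain ⟨v, hv, heq⟩ := Finset.exists_mem_eq_inf'
    (s := Finset.univ.filter fun v => w ∈ T.basin v) ⟨w, by simp [mem_component_self]⟩ T.high
  exact ⟨v, by simpa using hv, heq⟩

lemma isRealization_lowestBasinHigh (hle : ∀ v, T.low v ≤ T.high v) :
    T.IsRealization T.lowestBasinHigh := by
  intro w
  obtain ⟨v, hwv, heq⟩ := T.exists_lowestBasinHigh_eq w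
  exact ⟨heq ▸ low_le_of_mem_component (hle v) hwv, lowestBasinHigh_le mem_component_self⟩

-- In the realization `lowestBasinHigh`, every local minimum contains a whole basin.
lemma AlwaysMin.exists_isLowestHigh_basin_subset (hle : ∀ v, T.low v ≤ T.high v)
    {S : Set V} (hS : T.AlwaysMin S) : ∃ v, T.IsLowestHigh v ∧ T.basin v ⊆ S := by
  obtain ⟨P, hP, hPS⟩ := hS _ (isRealization_lowestBasinHigh hle)
  obtain ⟨p, hp⟩ := hP.1
  obtain ⟨v, hpv, hpeq⟩ := T.exists_lowestBasinHigh_eq p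
  obtain ⟨u, hu, huv⟩ := T.exists_isLowestHigh_basin_subset v
  have hvP : T.basin v ⊆ P := hP.basin_subset hp hpv fun w hw => hpeq ▸ lowestBasinHigh_le hw
  exact ⟨u, hu, huv.trans (hvP.trans hPS)⟩

lemma ImpreciseMin.exists_isLowestHigh_eq_basin (hle : ∀ v, T.low v ≤ T.high v)
    {S : Set V} (hS : T.ImpreciseMin S) : ∃ v, T.IsLowestHigh v ∧ S = T.basin v := by
  obtain ⟨v, hv, hvS⟩ := hS.1.exists_isLowestHigh_basin_subset hle
  refine ⟨v, hv, ?_⟩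
  by_contra hne
  exact hS.2 _ (ssubset_iff_subset_ne.2 ⟨hvS, Ne.symm hne⟩) (alwaysMin_basin v)

end Basin

def EventPrecedes (T : ImpTerrain V) (e₁ e₂ : V × Bool) : Prop :=
  T.eKey e₁ < T.eKey e₂ ∨ (T.eKey e₁ = T.eKey e₂ ∧ ¬(e₁.2 = true ∧ e₂.2 = false))

lemma EventPrecedes.eKey_le {e₁ e₂ : V × Bool} (h : T.EventPrecedes e₁ e₂) :
    T.eKey e₁ ≤ T.eKey e₂ :=
  h.elim le_of_lt fun h => h.1.le

lemma EventPrecedes.high_lt_low {v w : V} (h : T.EventPrecedes (v, true) (w, false)) :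
    T.high v < T.low w :=
  h.resolve_right fun h => h.2 ⟨rfl, rfl⟩

section EventList

variable {evs p rest : List (V × Bool)} {e : V × Bool} {v w : V}

lemma ValidEventList.split (hevs : T.ValidEventList evs) (hsplit : evs = p ++ e :: rest) :
    (∀ e' ∈ p, T.EventPrecedes e' e) ∧ (∀ e' ∈ rest, T.EventPrecedes e e') ∧ e ∉ p ∧
      ∀ e', e' ∈ p ∨ e' = e ∨ e' ∈ rest := by
  obtain ⟨hall, hnd, hpw⟩ := hevs
  subst hsplit
  rw [List.pairwise_append, List.pairwise_cons] at hpw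
  rw [List.nodup_append] at hnd
  refine ⟨fun e' he' => hpw.2.2 e' he' e List.mem_cons_self, hpw.2.1.1,
    fun he => hnd.2.2 e he e List.mem_cons_self rfl, fun e' => ?_⟩
  simpa using hall e'.1 e'.2

lemma ValidEventList.low_le_eKey (hevs : T.ValidEventList evs) (hsplit : evs = p ++ e :: rest)
    (hw : (w, false) ∈ p) : T.low w ≤ T.eKey e :=
  ((hevs.split hsplit).1 _ hw).eKey_le

lemma ValidEventList.eKey_le_high (hevs : T.ValidEventList evs) (hsplit : evs = p ++ e :: rest)
    (hw : (w, true) ∉ p) : T.eKey e ≤ T.high w := by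
  rcases (hevs.split hsplit).2.2.2 (w, true) with h | rfl | h
  · exact absurd h hw
  · exact le_rfl
  · exact ((hevs.split hsplit).2.1 _ h).eKey_le

lemma ValidEventList.mem_of_low_le_high (hevs : T.ValidEventList evs)
    (hsplit : evs = p ++ (v, true) :: rest) (hw : T.low w ≤ T.high v) : (w, false) ∈ p := by
  rcases (hevs.split hsplit).2.2.2 (w, false) with h | h | h
  · exact h
  · simp at h
  · exact absurd ((hevs.split hsplit).2.1 _ h).high_lt_low (not_lt.2 hw)

end EventList

noncomputable def finalizeComp (T : ImpTerrain V) (st : SweepState V) (x : V) (c : ℝ) :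
    V → Option ℝ :=
  fun w => if w ∈ T.pendComp st x then some c else st.final w

section SweepStep

variable {st : SweepState V} {v w x : V} {c : ℝ}

lemma isSome_finalizeComp :
    (T.finalizeComp st x c w).isSome ↔ w ∈ T.pendComp st x ∨ (st.final w).isSome := by
  unfold finalizeComp
  split_ifs with h <;> simp [h]

lemma finalizeComp_eq_none :
    T.finalizeComp st x c w = none ↔ w ∉ T.pendComp st x ∧ st.final w = none := by
  unfold finalizeComp
  split_ifs with h <;> simp [h]

lemma pendingS_of_mem_pendComp (hx : pendingS st x) (hw : w ∈ T.pendComp st x) :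
    pendingS st w :=
  prop_of_mem_component hx hw

lemma pendComp_subset_component {t : ℝ} (h : ∀ w ∈ st.discovered, T.low w ≤ t) (x : V) :
    T.pendComp st x ⊆ T.component (fun w => T.low w ≤ t) x :=
  component_mono fun w hw => h w hw.1

lemma not_pending_of_adj_finalizeComp (hx : pendingS st x)
    (h : ∀ a b, T.adj a b → (st.final b).isSome → pendingS st a → a ∈ T.pendComp st x)
    {P : Set V} {a b : V} (hab : T.adj a b) (hb : (T.finalizeComp st x c b).isSome) :
    ¬ pendingS ⟨st.discovered, T.finalizeComp st x c, P⟩ a := by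
  rintro ⟨ha, hna⟩
  rw [finalizeComp_eq_none] at hna
  rcases isSome_finalizeComp.1 hb with hbK | hbF
  · exact hna.1 (mem_component_of_adj hbK (T.adj_symm a b hab)
      (pendingS_of_mem_pendComp hx hbK) ⟨ha, hna.2⟩)
  · exact hna.1 (h a b hab hbF ⟨ha, hna.2⟩)

lemma sweepStep_low_of_exists (h : ∃ u, T.adj v u ∧ (st.final u).isSome) :
    T.sweepStep st (v, false) =
      ⟨insert v st.discovered,
        T.finalizeComp ⟨insert v st.discovered, st.final, st.proxies⟩ v (T.low v),
        st.proxies⟩ := by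
  simp only [sweepStep, if_pos h]
  rfl

lemma sweepStep_low_of_not_exists (h : ¬ ∃ u, T.adj v u ∧ (st.final u).isSome) :
    T.sweepStep st (v, false) = ⟨insert v st.discovered, st.final, st.proxies⟩ := by
  simp only [sweepStep, if_neg h]

lemma sweepStep_high_of_isSome (h : (st.final v).isSome) : T.sweepStep st (v, true) = st := by
  simp only [sweepStep, if_pos h]

lemma sweepStep_high_of_not_isSome (h : ¬ (st.final v).isSome) :
    T.sweepStep st (v, true) = ⟨st.discovered,
      T.finalizeComp st v (sSup (T.low '' T.pendComp st v)), insert v st.proxies⟩ := by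
  simp only [sweepStep, if_neg h]
  rfl

end SweepStep

/-- What holds after the events `p` have been processed. The last field carries the argument:
nothing in the basin of a lowest node is finalized before the first high event in that basin,
which therefore reports a proxy. -/
structure SweepInv (T : ImpTerrain V) (p : List (V × Bool)) (st : SweepState V) : Prop where
  mem_discovered : ∀ w, w ∈ st.discovered ↔ (w, false) ∈ p
  discovered_of_final : ∀ w, (st.final w).isSome → w ∈ st.discovered
  final_of_high : ∀ w, (w, true) ∈ p → (st.final w).isSome
  not_pending_of_adj_final : ∀ a b, T.adj a b → (st.final b).isSome → ¬ pendingS st a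
  final_of_proxy : ∀ v ∈ st.proxies, (st.final v).isSome
  isLowestHigh_of_proxy : ∀ v ∈ st.proxies, T.IsLowestHigh v
  eq_of_proxy : ∀ u ∈ st.proxies, ∀ v ∈ st.proxies, u ∈ T.basin v → u = v
  proxy_or_untouched : ∀ v, T.IsLowestHigh v → (∃ u ∈ st.proxies, u ∈ T.basin v) ∨
    ∀ w ∈ T.basin v, (w, true) ∉ p ∧ st.final w = none

lemma sweepInv_nil : T.SweepInv [] ⟨∅, fun _ => none, ∅⟩ where
  mem_discovered _ := by simp
  discovered_of_final _ h := by simp at h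
  final_of_high _ h := by simp at h
  not_pending_of_adj_final _ _ _ h := by simp at h
  final_of_proxy _ h := h.elim
  isLowestHigh_of_proxy _ h := h.elim
  eq_of_proxy _ h := h.elim
  proxy_or_untouched _ _ := Or.inr fun _ _ => by simp

lemma mem_basin_of_mem_component {t : ℝ} {u w x : V} (ht : t ≤ T.high u)
    (hw : w ∈ T.component (fun y => T.low y ≤ t) x) (hwu : w ∈ T.basin u) : x ∈ T.basin u :=
  component_trans hwu (component_symm (component_mono (fun _ hy => hy.trans ht) hw))

namespace SweepInv

variable {evs p rest : List (V × Bool)} {st : SweepState V} {v : V}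

lemma low_quiet (hinv : T.SweepInv p st) (h : ¬ ∃ u, T.adj v u ∧ (st.final u).isSome) :
    T.SweepInv (p ++ [(v, false)]) (T.sweepStep st (v, false)) := by
  rw [sweepStep_low_of_not_exists h]
  refine { hinv with
    mem_discovered := fun w => by simp [hinv.mem_discovered, or_comm]
    discovered_of_final := fun w hw => mem_insert_of_mem _ (hinv.discovered_of_final w hw)
    final_of_high := fun w hw => hinv.final_of_high w (by simpa using hw)
    not_pending_of_adj_final := fun a b hab hb ⟨ha, hna⟩ => ?_
    proxy_or_untouched := fun u hu => (hinv.proxy_or_untouched u hu).imp_right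
      fun h' w hw => ⟨by simpa using (h' w hw).1, (h' w hw).2⟩ }
  rcases mem_insert_iff.1 ha with rfl | ha
  · exact h ⟨b, hab, hb⟩
  · exact hinv.not_pending_of_adj_final a b hab hb ⟨ha, hna⟩

lemma high_skip (hinv : T.SweepInv p st) (h : (st.final v).isSome) :
    T.SweepInv (p ++ [(v, true)]) (T.sweepStep st (v, true)) := by
  rw [sweepStep_high_of_isSome h]
  refine { hinv with
    mem_discovered := fun w => by simp [hinv.mem_discovered]
    final_of_high := fun w hw => ?_
    proxy_or_untouched := fun u hu => (hinv.proxy_or_untouched u hu).imp_right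
      fun h' w hw => ⟨?_, (h' w hw).2⟩ }
  · rcases (by simpa using hw : (w, true) ∈ p ∨ w = v) with hw | rfl
    · exact hinv.final_of_high w hw
    · exact h
  · have hwv : w ≠ v := by
      rintro rfl
      simp [(h' w hw).2] at h
    simpa [hwv] using (h' w hw).1

lemma low_drain (hinv : T.SweepInv p st) (hevs : T.ValidEventList evs)
    (hsplit : evs = p ++ (v, false) :: rest) (h : ∃ u, T.adj v u ∧ (st.final u).isSome) :
    T.SweepInv (p ++ [(v, false)]) (T.sweepStep st (v, false)) := by
  rw [sweepStep_low_of_exists h]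
  set st₁ : SweepState V := ⟨insert v st.discovered, st.final, st.proxies⟩
  have hvn : st.final v = none := Option.not_isSome_iff_eq_none.1 fun hv =>
    (hevs.split hsplit).2.2.1 ((hinv.mem_discovered v).1 (hinv.discovered_of_final v hv))
  have hv : pendingS st₁ v := ⟨mem_insert v _, hvn⟩
  have hdisc : ∀ w ∈ st₁.discovered, T.low w ≤ T.low v := by
    rintro w (rfl | hw)
    · exact le_rfl
    · exact hevs.low_le_eKey hsplit ((hinv.mem_discovered w).1 hw)
  refine ⟨fun w => by simp [hinv.mem_discovered, or_comm], fun w hw => ?_,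
    fun w hw => isSome_finalizeComp.2 (Or.inr (hinv.final_of_high w (by simpa using hw))),
    fun a b hab => not_pending_of_adj_finalizeComp hv ?_ hab,
    fun u hu => isSome_finalizeComp.2 (Or.inr (hinv.final_of_proxy u hu)),
    hinv.isLowestHigh_of_proxy, hinv.eq_of_proxy, fun u hu => ?_⟩
  · rcases isSome_finalizeComp.1 hw with hw | hw
    · exact (pendingS_of_mem_pendComp hv hw).1
    · exact mem_insert_of_mem _ (hinv.discovered_of_final w hw)
  · rintro a b hab hb ⟨ha, hna⟩
    rcases mem_insert_iff.1 ha with rfl | ha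
    · exact mem_component_self
    · exact absurd ⟨ha, hna⟩ (hinv.not_pending_of_adj_final a b hab hb)
  · refine (hinv.proxy_or_untouched u hu).imp id fun h' => ?_
    have hvu_le : T.low v ≤ T.high u := hevs.eKey_le_high hsplit (h' u mem_component_self).1
    have hvu : v ∉ T.basin u := by
      intro hvu
      obtain ⟨y, hvy, hy⟩ := h
      have hyv : T.low y ≤ T.low v :=
        hdisc y (mem_insert_of_mem _ (hinv.discovered_of_final y hy))
      have hyu : y ∈ T.basin u := mem_component_of_adj hvu hvy hvu_le (hyv.trans hvu_le)
      simp [(h' y hyu).2] at hy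
    exact fun w hw => ⟨by simpa using (h' w hw).1, finalizeComp_eq_none.2
      ⟨fun hwK => hvu (mem_basin_of_mem_component hvu_le
        (pendComp_subset_component hdisc v hwK) hw), (h' w hw).2⟩⟩

-- By the high event of `v`, every node with `low ≤ high v` has been discovered.
lemma pendComp_eq_basin (hle : ∀ v, T.low v ≤ T.high v) (hinv : T.SweepInv p st)
    (hevs : T.ValidEventList evs) (hsplit : evs = p ++ (v, true) :: rest)
    (hvn : st.final v = none) : T.pendComp st v = T.basin v := by
  have hdisc : ∀ w ∈ st.discovered, T.low w ≤ T.high v :=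
    fun w hw => hevs.low_le_eKey hsplit ((hinv.mem_discovered w).1 hw)
  have hv : pendingS st v :=
    ⟨(hinv.mem_discovered v).2 (hevs.mem_of_low_le_high hsplit (hle v)), hvn⟩
  refine (pendComp_subset_component hdisc v).antisymm
    (component_subset mem_component_self fun a b ha hab _ hb => ?_)
  have ha' := pendingS_of_mem_pendComp hv ha
  have hbn : st.final b = none :=
    Option.not_isSome_iff_eq_none.1 fun hb' => hinv.not_pending_of_adj_final a b hab hb' ha'
  exact mem_component_of_adj ha hab ha'
    ⟨(hinv.mem_discovered b).2 (hevs.mem_of_low_le_high hsplit hb), hbn⟩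

lemma pendingS_of_mem_basin (hle : ∀ v, T.low v ≤ T.high v) (hinv : T.SweepInv p st)
    (hevs : T.ValidEventList evs) (hsplit : evs = p ++ (v, true) :: rest)
    (hvn : st.final v = none) {w : V} (hw : w ∈ T.basin v) : pendingS st w :=
  pendingS_of_mem_pendComp
    ⟨(hinv.mem_discovered v).2 (hevs.mem_of_low_le_high hsplit (hle v)), hvn⟩
    ((hinv.pendComp_eq_basin hle hevs hsplit hvn).symm.subset hw)

-- A node of the basin with a smaller `high` would already be finalized.
lemma isLowestHigh_of_final_eq_none (hle : ∀ v, T.low v ≤ T.high v) (hinv : T.SweepInv p st)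
    (hevs : T.ValidEventList evs) (hsplit : evs = p ++ (v, true) :: rest)
    (hvn : st.final v = none) : T.IsLowestHigh v := fun w hw => by
  by_contra! hlt
  have hwp : (w, true) ∈ p := by
    by_contra hwp
    exact hlt.not_ge (hevs.eKey_le_high hsplit hwp)
  simpa [(hinv.pendingS_of_mem_basin hle hevs hsplit hvn hw).2] using hinv.final_of_high w hwp

lemma high_report (hle : ∀ v, T.low v ≤ T.high v) (hinv : T.SweepInv p st)
    (hevs : T.ValidEventList evs) (hsplit : evs = p ++ (v, true) :: rest)
    (h : ¬ (st.final v).isSome) :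
    T.SweepInv (p ++ [(v, true)]) (T.sweepStep st (v, true)) := by
  rw [sweepStep_high_of_not_isSome h]
  have hvn : st.final v = none := Option.not_isSome_iff_eq_none.1 h
  have hv : pendingS st v := hinv.pendingS_of_mem_basin hle hevs hsplit hvn mem_component_self
  have hK := hinv.pendComp_eq_basin hle hevs hsplit hvn
  have hlowest := hinv.isLowestHigh_of_final_eq_none hle hevs hsplit hvn
  have hproxy : ∀ c ∈ st.proxies, c ∉ T.basin v := fun c hc hcv => by
    simpa [(hinv.pendingS_of_mem_basin hle hevs hsplit hvn hcv).2] using hinv.final_of_proxy c hc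
  have hproxy' : ∀ c ∈ st.proxies, v ∉ T.basin c := fun c hc hvc =>
    hproxy c hc ((hlowest.basin_eq (hinv.isLowestHigh_of_proxy c hc) hvc).symm.subset
      mem_component_self)
  refine ⟨fun w => by simp [hinv.mem_discovered], fun w hw => ?_, fun w hw => ?_,
    fun a b hab => not_pending_of_adj_finalizeComp hv
      (fun a b hab hb ha => absurd ha (hinv.not_pending_of_adj_final a b hab hb)) hab,
    ?_, ?_, ?_, fun u hu => ?_⟩
  · rcases isSome_finalizeComp.1 hw with hw | hw
    · exact (pendingS_of_mem_pendComp hv hw).1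
    · exact hinv.discovered_of_final w hw
  · rcases (by simpa using hw : (w, true) ∈ p ∨ w = v) with hw | rfl
    · exact isSome_finalizeComp.2 (Or.inr (hinv.final_of_high w hw))
    · exact isSome_finalizeComp.2 (Or.inl mem_component_self)
  · rintro u (rfl | hu)
    · exact isSome_finalizeComp.2 (Or.inl mem_component_self)
    · exact isSome_finalizeComp.2 (Or.inr (hinv.final_of_proxy u hu))
  · rintro u (rfl | hu)
    · exact hlowest
    · exact hinv.isLowestHigh_of_proxy u hu
  · rintro u (rfl | hu) w (rfl | hw) huw
    · rfl
    · exact absurd huw (hproxy' w hw)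
    · exact absurd huw (hproxy u hu)
    · exact hinv.eq_of_proxy u hu w hw huw
  · rcases hinv.proxy_or_untouched u hu with ⟨c, hc, hcu⟩ | h'
    · exact Or.inl ⟨c, mem_insert_of_mem _ hc, hcu⟩
    by_cases hvu : v ∈ T.basin u
    · exact Or.inl ⟨v, mem_insert v _, hvu⟩
    have hvu_le : T.high v ≤ T.high u := hevs.eKey_le_high hsplit (h' u mem_component_self).1
    refine Or.inr fun w hw => ⟨?_, finalizeComp_eq_none.2
      ⟨fun hwK => hvu (mem_basin_of_mem_component hvu_le (hK.subset hwK) hw), (h' w hw).2⟩⟩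
    have hwv : w ≠ v := by
      rintro rfl
      exact hvu hw
    simpa [hwv] using (h' w hw).1

lemma step (hle : ∀ v, T.low v ≤ T.high v) {e : V × Bool} (hinv : T.SweepInv p st)
    (hevs : T.ValidEventList evs) (hsplit : evs = p ++ e :: rest) :
    T.SweepInv (p ++ [e]) (T.sweepStep st e) := by
  obtain ⟨v, _ | _⟩ := e
  · by_cases h : ∃ u, T.adj v u ∧ (st.final u).isSome
    · exact hinv.low_drain hevs hsplit h
    · exact hinv.low_quiet h
  · by_cases h : (st.final v).isSome
    · exact hinv.high_skip h
    · exact hinv.high_report hle hevs hsplit h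

lemma foldl_sweepStep (hle : ∀ v, T.low v ≤ T.high v) (hevs : T.ValidEventList evs) :
    ∀ rest p st, evs = p ++ rest → T.SweepInv p st →
      T.SweepInv evs (rest.foldl T.sweepStep st)
  | [], p, st, hsplit, hinv => by simpa [hsplit] using hinv
  | e :: rest, p, st, hsplit, hinv =>
    foldl_sweepStep hle hevs rest (p ++ [e]) _ (by simp [hsplit]) (hinv.step hle hevs hsplit)

lemma exists_proxy_mem_basin (hinv : T.SweepInv evs st) (hevs : T.ValidEventList evs)
    (hv : T.IsLowestHigh v) : ∃ u ∈ st.proxies, u ∈ T.basin v :=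
  (hinv.proxy_or_untouched v hv).resolve_right fun h =>
    (h v mem_component_self).1 (hevs.1 v true)

end SweepInv

lemma sweepInv_sweepRun (hle : ∀ v, T.low v ≤ T.high v) {evs : List (V × Bool)}
    (hevs : T.ValidEventList evs) : T.SweepInv evs (T.sweepRun evs) :=
  SweepInv.foldl_sweepStep hle hevs evs [] _ rfl sweepInv_nil

end ImpTerrain

/-- The sweep-plane minimum-removal algorithm reports exactly one proxy of each
imprecise minimum: every reported node is a proxy of some imprecise minimum,
and every imprecise minimum has exactly one reported proxy. -/
theorem stmt18 {V : Type} [Fintype V] [DecidableEq V] (T : ImpTerrain V)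
    (hle : ∀ v, T.low v ≤ T.high v)
    (evs : List (V × Bool)) (hevs : T.ValidEventList evs) :
    (∀ v ∈ (T.sweepRun evs).proxies, ∃ S, T.ImpreciseMin S ∧ T.IsProxy S v) ∧
      ∀ S, T.ImpreciseMin S →
        ∃! v, v ∈ (T.sweepRun evs).proxies ∧ v ∈ S ∧ T.IsProxy S v := by
  have hinv := T.sweepInv_sweepRun hle hevs
  refine ⟨fun v hv => ⟨T.basin v, (hinv.isLowestHigh_of_proxy v hv).impreciseMin hle,
    T.isProxy_basin v⟩, fun S hS => ?_⟩
  obtain ⟨v, hv, rfl⟩ := hS.exists_isLowestHigh_eq_basin hle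
  obtain ⟨u, hu, huv⟩ := hinv.exists_proxy_mem_basin hevs hv
  have hbasin := (hinv.isLowestHigh_of_proxy u hu).basin_eq hv huv
  refine ⟨u, ⟨hu, huv, hbasin ▸ T.isProxy_basin u⟩, fun w ⟨hw, hwv, _⟩ => ?_⟩
  exact hinv.eq_of_proxy w hw u hu (hbasin ▸ hwv)
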